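/- Let G be a countable amenable group acting freely and measure-preservingly on a standard probability space (X,μ), and suppose {gB_i : 1 ≤ i ≤ m, g ∈ S_i} partitions X up to measure zero, where each S_i ⊂ G is finite and contains e. Define B_0 = X \ ⋃_{i=1}^m B_i and the factor map ψ : X → Ω̄ = {0,1,…,m}^G by ψ(x)_g = i if and only if gx ∈ B_i (0 ≤ i ≤ m), and let ν = ψ*(μ). Then the symbolic system (Ω̄,ν,σ) has the tiling property: for ν-almost every ω̄ ∈ Ω̄, the family {S_i g : 1 ≤ i ≤ m, ω̄_g = i} is a partition of G. -/

import Mathlib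

open MeasureTheory Filter
open scoped ENNReal symmDiff Pointwise Classical

noncomputable section

/-- The shift action of a group `G` on `Λ^G` : `(gShift g ω) h = ω (h * g)`. -/
def gShift {G Λ : Type} [Group G] (g : G) (ω : G → Λ) : G → Λ := fun h => ω (h * g)

/-- The shift on `ℤ`-indexed sequences: `(zShift k x) n = x (n + k)`. -/
def zShift {A : Type} (k : ℤ) (x : ℤ → A) : ℤ → A := fun n => x (n + k)

/-- Invariance of a measure on `Λ^G` under the `G`-shift. -/
def ShiftInvariant {G Λ : Type} [Group G] [MeasurableSpace Λ]
    (μ : Measure (G → Λ)) : Prop :=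
  ∀ g : G, Measure.map (gShift g) μ = μ

/-- A finite set `F ⊆ G` is `(K,γ)`-invariant if `|KF ∆ F| < γ·|F|`. -/
def KInv {G : Type} [Group G] [DecidableEq G] (K : Finset G) (γ : ℝ) (F : Finset G) : Prop :=
  (((K * F) ∆ F).card : ℝ) < γ * (F.card : ℝ)

/-- A Følner sequence in a countable group `G`: a sequence of nonempty finite sets that is
eventually `(K,γ)`-invariant for every finite `K` and `γ > 0`. -/
def IsFolnerSeq {G : Type} [Group G] [DecidableEq G] (Fs : ℕ → Finset G) : Prop :=
  (∀ n, (Fs n).Nonempty) ∧ ∀ (K : Finset G) (γ : ℝ), 0 < γ → ∀ᶠ n in atTop, KInv K γ (Fs n)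

/-- Shannon entropy of the partition of `Λ^G` into cylinders over a finite set `F`. -/
def blockEnt {G Λ : Type} [Group G] [DecidableEq G] [Fintype Λ] [MeasurableSpace Λ]
    (μ : Measure (G → Λ)) (F : Finset G) : ℝ :=
  ∑ α : { g // g ∈ F } → Λ,
    Real.negMulLog (μ {ω : G → Λ | ∀ g : { g // g ∈ F }, ω (g : G) = α g}).toReal

/-- Kolmogorov–Sinai entropy of a shift-invariant measure on `Λ^G`, computed by averaging the
Shannon entropies of block partitions along a (Følner) sequence `Fs`. -/
def entAlong {G Λ : Type} [Group G] [DecidableEq G] [Fintype Λ] [MeasurableSpace Λ]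
    (Fs : ℕ → Finset G) (μ : Measure (G → Λ)) : ℝ :=
  limsup (fun n => blockEnt μ (Fs n) / ((Fs n).card : ℝ)) atTop

/-- Conditional Shannon entropy of the `Λ`-block partition over `F` given the `Λ₁`-block
partition over `F` pulled back through the factor map `π`. -/
def condBlockEnt {G Λ Λ₁ : Type} [Group G] [DecidableEq G]
    [Fintype Λ] [MeasurableSpace Λ] [Fintype Λ₁] [MeasurableSpace Λ₁]
    (μ : Measure (G → Λ)) (π : (G → Λ) → (G → Λ₁)) (F : Finset G) : ℝ :=
  (∑ q : ({ g // g ∈ F } → Λ) × ({ g // g ∈ F } → Λ₁),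
    Real.negMulLog (μ {ω : G → Λ |
      (∀ g : { g // g ∈ F }, ω (g : G) = q.1 g) ∧
      (∀ g : { g // g ∈ F }, π ω (g : G) = q.2 g)}).toReal)
  - ∑ β : { g // g ∈ F } → Λ₁,
      Real.negMulLog (μ {ω : G → Λ | ∀ g : { g // g ∈ F }, π ω (g : G) = β g}).toReal

/-- Conditional (relative) Kolmogorov–Sinai entropy `h(μ | Ω₁)` of a shift-invariant measure on
`Λ^G` over the factor `π : Λ^G → Λ₁^G`, computed along the sequence `Fs`. -/
def condEntAlong {G Λ Λ₁ : Type} [Group G] [DecidableEq G]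
    [Fintype Λ] [MeasurableSpace Λ] [Fintype Λ₁] [MeasurableSpace Λ₁]
    (Fs : ℕ → Finset G) (μ : Measure (G → Λ)) (π : (G → Λ) → (G → Λ₁)) : ℝ :=
  limsup (fun n => condBlockEnt μ π (Fs n) / ((Fs n).card : ℝ)) atTop

/-- `ν` is the i.i.d. (product) measure on `Δ^G` with one-coordinate distribution `p`. -/
def IsIIDG {G Δ : Type} [Group G] [MeasurableSpace Δ]
    (ν : Measure (G → Δ)) (p : Δ → ℝ≥0∞) : Prop :=
  ∀ (F : Finset G) (α : { g // g ∈ F } → Δ),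
    ν {ω : G → Δ | ∀ g : { g // g ∈ F }, ω (g : G) = α g} = ∏ g : { g // g ∈ F }, p (α g)

/-- A measure-theoretic isomorphism between two measure-preserving `G`-systems. -/
def IsMeasIsoG {G Y Z : Type} [Group G] [MeasurableSpace Y] [MeasurableSpace Z]
    (μ : Measure Y) (ν : Measure Z) (S : G → Y → Y) (T : G → Z → Z) : Prop :=
  ∃ (f : Y → Z) (f' : Z → Y), Measurable f ∧ Measurable f' ∧
    Measure.map f μ = ν ∧ Measure.map f' ν = μ ∧
    (∀ g : G, ∀ᵐ y ∂μ, f (S g y) = T g (f y)) ∧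
    (∀ᵐ y ∂μ, f' (f y) = y) ∧ (∀ᵐ z ∂ν, f (f' z) = z)

/-- A measure-preserving `G`-system is Bernoulli if it is measure-theoretically isomorphic to an
i.i.d. `G`-process (over a finite alphabet). -/
def IsBernoulliG {G Y : Type} [Group G] [MeasurableSpace Y]
    (μ : Measure Y) (S : G → Y → Y) : Prop :=
  ∃ (n : ℕ) (p : Fin n → ℝ≥0∞) (ν : Measure (G → Fin n)),
    (∑ i, p i) = 1 ∧ IsIIDG ν p ∧ IsMeasIsoG μ ν S gShift

/-- A measure-preserving `G`-system `(Y,μ,τY)` is Bernoulli relative to a factor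
`(B,νB,τB)` along the factor map `proj` if it is isomorphic, by an isomorphism whose first
coordinate is `proj`, to the direct product of the factor with an i.i.d. `G`-process. -/
def IsRelBernoulliG {G Y B : Type} [Group G] [MeasurableSpace Y] [MeasurableSpace B]
    (μ : Measure Y) (τY : G → Y → Y) (νB : Measure B) (τB : G → B → B) (proj : Y → B) : Prop :=
  ∃ (n : ℕ) (p : Fin n → ℝ≥0∞) (ν : Measure (G → Fin n)),
    (∑ i, p i) = 1 ∧ IsIIDG ν p ∧
    ∃ (f : Y → B × (G → Fin n)) (f' : B × (G → Fin n) → Y),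
      Measurable f ∧ Measurable f' ∧
      Measure.map f μ = νB.prod ν ∧ Measure.map f' (νB.prod ν) = μ ∧
      (∀ g : G, ∀ᵐ y ∂μ, f (τY g y) = (τB g (f y).1, gShift g (f y).2)) ∧
      (∀ᵐ y ∂μ, f' (f y) = y) ∧ (∀ᵐ z ∂(νB.prod ν), f (f' z) = z) ∧
      (∀ᵐ y ∂μ, (f y).1 = proj y)

/-- Ergodicity of a shift-invariant measure on `Λ^G`. -/
def ErgodicShiftG {G Λ : Type} [Group G] [MeasurableSpace Λ] (μ : Measure (G → Λ)) : Prop :=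
  ∀ s : Set (G → Λ), MeasurableSet s → (∀ g : G, gShift g ⁻¹' s = s) → μ s = 0 ∨ μ s = 1

/-- Freeness of a shift-invariant measure on `Λ^G`. -/
def FreeShift {G Λ : Type} [Group G] [MeasurableSpace Λ] (μ : Measure (G → Λ)) : Prop :=
  ∀ g : G, g ≠ 1 → μ {ω : G → Λ | gShift g ω = ω} = 0

/-- A measurable measure-preserving action of a group `G` on a measure space. -/
def IsMPAction {G X : Type} [Group G] [MeasurableSpace X]
    (μ : Measure X) (τ : G → X → X) : Prop :=
  (∀ x, τ 1 x = x) ∧ (∀ g h x, τ (g * h) x = τ g (τ h x)) ∧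
  (∀ g, Measurable (τ g)) ∧ (∀ g, Measure.map (τ g) μ = μ)

/-- Freeness of a measure-preserving action. -/
def IsFreeAction {G X : Type} [Group G] [MeasurableSpace X]
    (μ : Measure X) (τ : G → X → X) : Prop :=
  ∀ g : G, g ≠ 1 → μ {x : X | τ g x = x} = 0

/-- The itinerary (tiling factor map) of a point with respect to the bases `B i`:
`itin τ B x g = some i` iff `τ g x` lies in the base `B i`. -/
def itin {G X : Type} [Group G] {m : ℕ} (τ : G → X → X) (B : Fin m → Set X) (x : X) :
    G → Option (Fin m) :=
  fun g => if h : ∃ i, τ g x ∈ B i then some h.choose else none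

/-- Shannon entropy of the length-`n` block partition of `A^ℤ`. -/
def blockEntZ {A : Type} [Fintype A] [MeasurableSpace A]
    (μ : Measure (ℤ → A)) (n : ℕ) : ℝ :=
  ∑ α : Fin n → A,
    Real.negMulLog (μ {x : ℤ → A | ∀ i : Fin n, x ((i : ℕ) : ℤ) = α i}).toReal

/-- Kolmogorov–Sinai entropy of a shift-invariant measure on `A^ℤ`. -/
def entZ {A : Type} [Fintype A] [MeasurableSpace A] (μ : Measure (ℤ → A)) : ℝ :=
  limsup (fun n => blockEntZ μ n / (n : ℝ)) atTop

/-- `ν` is the i.i.d. (product) measure on `Δ^ℤ` with one-coordinate distribution `p`. -/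
def IsIIDZ {Δ : Type} [MeasurableSpace Δ] (ν : Measure (ℤ → Δ)) (p : Δ → ℝ≥0∞) : Prop :=
  ∀ (F : Finset ℤ) (α : { n // n ∈ F } → Δ),
    ν {x : ℤ → Δ | ∀ n : { n // n ∈ F }, x (n : ℤ) = α n} = ∏ n : { n // n ∈ F }, p (α n)

/-- A measure-theoretic isomorphism between two measure-preserving `ℤ`-systems
(given by single transformations). -/
def IsMeasIsoZ {Y Z : Type} [MeasurableSpace Y] [MeasurableSpace Z]
    (μ : Measure Y) (ν : Measure Z) (S : Y → Y) (T : Z → Z) : Prop :=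
  ∃ (f : Y → Z) (f' : Z → Y), Measurable f ∧ Measurable f' ∧
    Measure.map f μ = ν ∧ Measure.map f' ν = μ ∧
    (∀ᵐ y ∂μ, f (S y) = T (f y)) ∧
    (∀ᵐ y ∂μ, f' (f y) = y) ∧ (∀ᵐ z ∂ν, f (f' z) = z)

/-- A measure-preserving `ℤ`-system is Bernoulli if it is isomorphic to an i.i.d. `ℤ`-process. -/
def IsBernoulliZ {Y : Type} [MeasurableSpace Y] (μ : Measure Y) (S : Y → Y) : Prop :=
  ∃ (n : ℕ) (p : Fin n → ℝ≥0∞) (ν : Measure (ℤ → Fin n)),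
    (∑ i, p i) = 1 ∧ IsIIDZ ν p ∧ IsMeasIsoZ μ ν S (zShift 1)

/-- A measure-preserving `ℤ`-system `(Y,μ,T)` is Bernoulli relative to a factor `(B,νB,TB)`
along the factor map `proj` if it is isomorphic, by an isomorphism whose first coordinate is
`proj`, to the direct product of the factor with an i.i.d. `ℤ`-process. -/
def IsRelBernoulliZ {Y B : Type} [MeasurableSpace Y] [MeasurableSpace B]
    (μ : Measure Y) (T : Y → Y) (νB : Measure B) (TB : B → B) (proj : Y → B) : Prop :=
  ∃ (n : ℕ) (p : Fin n → ℝ≥0∞) (ν : Measure (ℤ → Fin n)),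
    (∑ i, p i) = 1 ∧ IsIIDZ ν p ∧
    ∃ (f : Y → B × (ℤ → Fin n)) (f' : B × (ℤ → Fin n) → Y),
      Measurable f ∧ Measurable f' ∧
      Measure.map f μ = νB.prod ν ∧ Measure.map f' (νB.prod ν) = μ ∧
      (∀ᵐ y ∂μ, f (T y) = (TB (f y).1, zShift 1 (f y).2)) ∧
      (∀ᵐ y ∂μ, f' (f y) = y) ∧ (∀ᵐ z ∂(νB.prod ν), f (f' z) = z) ∧
      (∀ᵐ y ∂μ, (f y).1 = proj y)

/-- The `n`-th power (`n ∈ ℤ`) of an invertible transformation given by `f` and its inverse. -/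
def zIter {Y : Type} (f finv : Y → Y) (n : ℤ) : Y → Y :=
  if 0 ≤ n then f^[n.toNat] else finv^[(-n).toNat]

/-- The `(R, [n₁, n₁+N-1])`-name of a point: the atom of `⋁_{i=n₁}^{n₁+N-1} T^{-i} R`
containing it, where the partition `R` is given by a map into a finite set `W`. -/
def wordOf {Y W : Type} (f finv : Y → Y) (R : Y → W) (n₁ : ℤ) (N : ℕ) (y : Y) : Fin N → W :=
  fun k => R (zIter f finv (n₁ + ((k : ℕ) : ℤ)) y)

/-- The distribution of the partition (given by) `R` conditioned on the set `E`. -/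
def condDist {Y W : Type} [MeasurableSpace Y] (μ : Measure Y) (R : Y → W) (E : Set Y) :
    W → ℝ := fun w => (μ (E ∩ R ⁻¹' {w})).toReal / (μ E).toReal

/-- ℓ¹ distance between two distributions on a finite set. -/
def distL1 {W : Type} [Fintype W] (p q : W → ℝ) : ℝ := ∑ w, |p w - q w|

/-- Normalized Hamming distance between two words of length `N`. -/
def hammDist {W : Type} [DecidableEq W] {N : ℕ} (a b : Fin N → W) : ℝ :=
  ((Finset.univ.filter (fun k => a k ≠ b k)).card : ℝ) / (N : ℝ)

/-- The `d̄`-distance between two distributions on words of length `N`: the infimum over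
couplings of the expected normalized Hamming distance. -/
def dbarN {W : Type} [Fintype W] [DecidableEq W] (N : ℕ) (p q : (Fin N → W) → ℝ) : ℝ :=
  sInf {r : ℝ | ∃ ξ : ((Fin N → W) × (Fin N → W)) → ℝ,
    (∀ pr, 0 ≤ ξ pr) ∧ (∀ a, (∑ b, ξ (a, b)) = p a) ∧ (∀ b, (∑ a, ξ (a, b)) = q b) ∧
    r = ∑ pr : (Fin N → W) × (Fin N → W), ξ pr * hammDist pr.1 pr.2}

/-- The partition `R` is very weakly Bernoulli relative to the partition `Q` for the invertible
transformation given by `f`, `finv`. -/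
def IsVWBrel {Y W V : Type} [MeasurableSpace Y] [Fintype W] [DecidableEq W]
    (μ : Measure Y) (f finv : Y → Y) (R : Y → W) (Q : Y → V) : Prop :=
  ∀ ε : ℝ, 0 < ε → ∃ N k₀ : ℕ, 0 < N ∧ ∀ k : ℕ, k₀ ≤ k →
    ∃ 𝒢 : Set ((Fin k → W) × (Fin (2 * k + 1) → V)),
      (μ {y | (wordOf f finv R (-(k : ℤ)) k y, wordOf f finv Q (-(k : ℤ)) (2 * k + 1) y) ∈ 𝒢}).toReal
        > 1 - ε ∧
      ∀ (a : Fin k → W) (b : Fin (2 * k + 1) → V), (a, b) ∈ 𝒢 →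
        dbarN N
          (condDist μ (wordOf f finv R 0 N)
            {y | wordOf f finv R (-(k : ℤ)) k y = a ∧ wordOf f finv Q (-(k : ℤ)) (2 * k + 1) y = b})
          (condDist μ (wordOf f finv R 0 N)
            {y | wordOf f finv Q (-(k : ℤ)) (2 * k + 1) y = b}) < ε

/-- Shannon entropy of a finite partition given by a map `R : Y → W`. -/
def partEnt {Y W : Type} [MeasurableSpace Y] [Fintype W] (μ : Measure Y) (R : Y → W) : ℝ :=
  ∑ w : W, Real.negMulLog (μ (R ⁻¹' {w})).toReal

/-- Conditional Shannon entropy `H(R | Q)` of finite partitions. -/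
def condEnt {Y W V : Type} [MeasurableSpace Y] [Fintype W] [Fintype V]
    (μ : Measure Y) (R : Y → W) (Q : Y → V) : ℝ :=
  partEnt μ (fun y => (R y, Q y)) - partEnt μ Q

/-- `R₀` is conditionally `ε`-independent of `R₂` given `R₁`. -/
def CondEpsIndep {Y W₀ W₁ W₂ : Type} [MeasurableSpace Y] [Fintype W₀]
    (μ : Measure Y) (R₀ : Y → W₀) (R₁ : Y → W₁) (R₂ : Y → W₂) (ε : ℝ) : Prop :=
  ∃ 𝒞 : Set (W₁ × W₂),
    (μ {y | (R₁ y, R₂ y) ∈ 𝒞}).toReal > 1 - ε ∧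
    ∀ c ∈ 𝒞, distL1 (condDist μ R₀ {y | R₁ y = c.1 ∧ R₂ y = c.2})
      (condDist μ R₀ {y | R₁ y = c.1}) < ε

/-- A family `S` of sets generates the full sigma-algebra modulo `μ`-null sets. -/
def IsGenMod {Y : Type} [MeasurableSpace Y] (μ : Measure Y) (S : Set (Set Y)) : Prop :=
  ∀ s : Set Y, MeasurableSet s →
    ∃ t : Set Y, MeasurableSet[MeasurableSpace.generateFrom S] t ∧ μ (s ∆ t) = 0

end

/-!
Apply the a.e. partition hypothesis at every point `h x` of the orbit of `x` (countably many
translates of a conull set, each conull since the action preserves `μ`). At `g x` and the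
shape element `1`, uniqueness says that `g x` lies in at most one base, so `ω̄_g = i` exactly
when `g x ∈ B i`. Then `h ∈ S i g` with `ω̄_g = i` is the same as `h x` lying in the level
`s B i` with `s = h g⁻¹ ∈ S i`, and `g ↦ h g⁻¹` is a bijection of `G`, so the unique level
containing `h x` gives the unique tile containing `h`.
-/

namespace IsMPAction

variable {G X : Type} [Group G] [MeasurableSpace X] {μ : Measure X} {τ : G → X → X}

lemma quasiMeasurePreserving (hτ : IsMPAction μ τ) (g : G) :
    Measure.QuasiMeasurePreserving (τ g) μ μ :=
  ⟨hτ.2.2.1 g, (hτ.2.2.2 g).le.absolutelyContinuous⟩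

lemma ae_forall_apply [Countable G] (hτ : IsMPAction μ τ) {P : X → Prop}
    (hP : ∀ᵐ x ∂μ, P x) : ∀ᵐ x ∂μ, ∀ g, P (τ g x) :=
  ae_all_iff.2 fun g => (hτ.quasiMeasurePreserving g).ae hP

end IsMPAction

section Tiling

variable {G X : Type} [Group G] {τ : G → X → X} {m : ℕ} {B : Fin m → Set X}
  {S : Fin m → Finset G}

/-- `y` lies in the level `p.2 • B p.1` of the tower over `B p.1` with shape `S p.1`. -/
def InTowerLevel (τ : G → X → X) (B : Fin m → Set X) (S : Fin m → Finset G) (y : X)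
    (p : Fin m × G) : Prop :=
  p.2 ∈ S p.1 ∧ τ p.2⁻¹ y ∈ B p.1

lemma mem_of_itin_eq_some {x : X} {g : G} {i : Fin m} (hi : itin τ B x g = some i) :
    τ g x ∈ B i := by
  unfold itin at hi
  split_ifs at hi with hex
  exact Option.some.inj hi ▸ hex.choose_spec

lemma itin_eq_some_iff (hone : ∀ y, τ 1 y = y) (hSone : ∀ i, (1 : G) ∈ S i) {x : X} {g : G}
    (hx : ∃! p, InTowerLevel τ B S (τ g x) p) {i : Fin m} :
    itin τ B x g = some i ↔ τ g x ∈ B i := by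
  refine ⟨mem_of_itin_eq_some, fun hi => ?_⟩
  have hex : ∃ j, τ g x ∈ B j := ⟨i, hi⟩
  have level_one {j : Fin m} (hj : τ g x ∈ B j) : InTowerLevel τ B S (τ g x) (j, 1) :=
    ⟨hSone j, by rwa [inv_one, hone]⟩
  have : (hex.choose, (1 : G)) = (i, 1) := hx.unique (level_one hex.choose_spec) (level_one hi)
  rw [itin, dif_pos hex, (Prod.mk.inj this).1]

variable [DecidableEq G]

lemma tile_iff_inTowerLevel (hone : ∀ y, τ 1 y = y) (hmul : ∀ g h y, τ (g * h) y = τ g (τ h y))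
    (hSone : ∀ i, (1 : G) ∈ S i) {x : X} (hx : ∀ g, ∃! p, InTowerLevel τ B S (τ g x) p)
    (h : G) (p : Fin m × G) :
    (itin τ B x p.2 = some p.1 ∧ h ∈ (S p.1).image (· * p.2)) ↔
      InTowerLevel τ B S (τ h x) (p.1, h * p.2⁻¹) := by
  have mem_image : h ∈ (S p.1).image (· * p.2) ↔ h * p.2⁻¹ ∈ S p.1 := by
    rw [Finset.mem_image]
    exact ⟨fun ⟨s, hs, hsh⟩ => by rwa [← hsh, mul_inv_cancel_right],
      fun hs => ⟨_, hs, inv_mul_cancel_right h p.2⟩⟩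
  rw [itin_eq_some_iff hone hSone (hx p.2), mem_image, InTowerLevel, ← hmul, mul_inv_rev,
    inv_inv, inv_mul_cancel_right, and_comm]

lemma existsUnique_tile (hone : ∀ y, τ 1 y = y) (hmul : ∀ g h y, τ (g * h) y = τ g (τ h y))
    (hSone : ∀ i, (1 : G) ∈ S i) {x : X} (hx : ∀ g, ∃! p, InTowerLevel τ B S (τ g x) p)
    (h : G) :
    ∃! p : Fin m × G, itin τ B x p.2 = some p.1 ∧ h ∈ (S p.1).image (· * p.2) :=
  ((Equiv.refl (Fin m)).prodCongr ((Equiv.inv G).trans (Equiv.mulLeft h))).existsUnique_congr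
    (tile_iff_inTowerLevel hone hmul hSone hx h) |>.2 (hx h)

end Tiling

theorem tiling_property_of_towers_general
    {G X : Type} [Group G] [Countable G] [DecidableEq G]
    [MeasurableSpace X]
    (μ : Measure X)
    (τ : G → X → X) (hτ : IsMPAction μ τ)
    {m : ℕ} (B : Fin m → Set X) (S : Fin m → Finset G)
    (hSone : ∀ i, (1 : G) ∈ S i)
    (hpart : ∀ᵐ x ∂μ, ∃! p : Fin m × G, p.2 ∈ S p.1 ∧ τ p.2⁻¹ x ∈ B p.1) :
    ∀ᵐ x ∂μ, ∀ h : G, ∃! p : Fin m × G,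
      itin τ B x p.2 = some p.1 ∧ h ∈ (S p.1).image (fun s => s * p.2) := by
  filter_upwards [hτ.ae_forall_apply hpart] with x hx h
  exact existsUnique_tile hτ.1 hτ.2.1 hSone hx h

/-- **The tiling property of the tiling factor.** If the levels `g B i` (`g ∈ S i`) of the
towers partition `X` up to measure zero, then for almost every `x` the itinerary
`ω̄ = itin τ B x` has the property that the tiles `{S i · g : ω̄ g = i}` partition `G`;
that is, the push-forward `ν = ψ_* μ` satisfies the tiling property a.e. -/
theorem tiling_property_of_towers
    {G X : Type} [Group G] [Countable G] [DecidableEq G]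
    [MeasurableSpace X] [StandardBorelSpace X]
    (μ : Measure X) [IsProbabilityMeasure μ]
    (τ : G → X → X) (hτ : IsMPAction μ τ) (hfree : IsFreeAction μ τ)
    {m : ℕ} (B : Fin m → Set X) (S : Fin m → Finset G)
    (hBmeas : ∀ i, MeasurableSet (B i)) (hSone : ∀ i, (1 : G) ∈ S i)
    (hpart : ∀ᵐ x ∂μ, ∃! p : Fin m × G, p.2 ∈ S p.1 ∧ τ p.2⁻¹ x ∈ B p.1) :
    ∀ᵐ x ∂μ, ∀ h : G, ∃! p : Fin m × G,
      itin τ B x p.2 = some p.1 ∧ h ∈ (S p.1).image (fun s => s * p.2) :=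
  tiling_property_of_towers_general μ τ hτ B S hSone hpart
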